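/- arXiv:1806.02553 — 6 statements merged into one kernel-verified Lean document; each statement's English description precedes it below -/
import Mathlib

section
/- There exists a constant K ≥ 1 (one may take Grothendieck's constant K_G) such that for every real number p with 2 ≤ p < ∞, every Banach lattice X, every bounded linear operator T : ℓ_p → X, every m ∈ ℕ and all real scalars λ_1, …, λ_m, one has ‖∑_{i=1}^m λ_i |T e_i|‖_X ≤ K · ‖T‖ · (∑_{i=1}^m |λ_i|^r)^{1/r}, where r is determined by 1/r = 1/2 + 1/p and e_i denotes the i-th canonical basis vector of ℓ_p. -/
/-!
For `|λᵢ| = aᵢ bᵢ` with `aᵢ = |λᵢ| ^ (r / 2)` and `bᵢ = |λᵢ| ^ (r / p)`, Cauchy–Schwarz and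
Khintchine's inequality bound `∑ |λᵢ| |tᵢ|` on `ℝᵐ` by `(16 / 9) ‖a‖₂` times the average of
`|∑ ±bᵢ tᵢ|` over all signs. By Hahn–Banach, every vector `(±λᵢ)` then lies in the zonotope spanned
by the vectors `(±bᵢ)`, which transfers the scalar inequality to `∑ |λᵢ| |T eᵢ|` in any vector
lattice. Finally, `‖T (∑ ±bᵢ eᵢ)‖ ≤ ‖T‖ ‖b‖_p`, and `‖a‖₂ ‖b‖_p = ‖λ‖_r`.
-/

open Filter Topology

section OrderedModule

variable {X : Type*} [Lattice X] [AddCommGroup X] [IsOrderedAddMonoid X] [Module ℝ X]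

lemma natCast_div_two_pow_smul_nonneg {x : X} (hx : 0 ≤ x) (k n : ℕ) :
    0 ≤ ((k : ℝ) / 2 ^ n) • x := by
  induction n with
  | zero => simpa [Nat.cast_smul_eq_nsmul] using nsmul_nonneg hx k
  | succ n ih =>
    refine nsmul_two_semiclosed ?_
    rwa [← Nat.cast_smul_eq_nsmul ℝ, smul_smul, Nat.cast_ofNat, pow_succ, ← div_div,
      mul_div_cancel₀ _ two_ne_zero]

/-- A Banach lattice is only assumed to be a lattice-ordered group, so the compatibility of the
order with real scalars has to be derived: from `0 ≤ 2 • y → 0 ≤ y` on dyadic scalars, then by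
density. -/
lemma posSMulMono_of_closedIciTopology [TopologicalSpace X] [ClosedIciTopology X]
    [ContinuousSMul ℝ X] : PosSMulMono ℝ X := by
  refine PosSMulMono.of_smul_nonneg fun c hc x hx => ?_
  have hdyadic : Tendsto (fun n : ℕ => ((⌊c * 2 ^ n⌋₊ : ℝ) / 2 ^ n)) atTop (𝓝 c) :=
    (tendsto_nat_floor_mul_div_atTop hc).comp (tendsto_pow_atTop_atTop_of_one_lt one_lt_two)
  exact isClosed_Ici.mem_of_tendsto (hdyadic.smul_const x)
    (Eventually.of_forall fun n => natCast_div_two_pow_smul_nonneg hx _ n)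

variable [PosSMulMono ℝ X]

lemma abs_smul_of_posSMulMono (a : ℝ) (x : X) : |a • x| = |a| • |x| := by
  suffices h : ∀ a : ℝ, 0 < a → ∀ x : X, |a • x| = a • |x| by
    rcases lt_trichotomy a 0 with ha | rfl | ha
    · rw [← neg_smul_neg, h _ (neg_pos.mpr ha), abs_neg, abs_of_neg ha]
    · simp
    · rw [h a ha, abs_of_pos ha]
  intro a ha x
  rw [abs, abs, ← smul_neg]
  exact ((OrderIso.smulRight ha).map_sup x (-x)).symm

lemma abs_sum_smul_abs_le {ι : Type*} [Fintype ι] (c : ι → ℝ) (y : ι → X) :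
    |(∑ i, c i • |y i|)| ≤ ∑ i, |c i • y i| := by
  refine (Finset.le_sum_of_subadditive _ abs_zero.le abs_add_le _ _).trans_eq ?_
  simp only [abs_smul_of_posSMulMono, abs_abs]

end OrderedModule

def signFlip {ι M : Type*} [Neg M] (σ : ι → Bool) (x : ι → M) (i : ι) : M :=
  if σ i then x i else -x i

section SignFlip

variable {ι M : Type*}

lemma abs_signFlip [Lattice M] [AddGroup M] (σ : ι → Bool) (x : ι → M) (i : ι) :
    |signFlip σ x i| = |x i| := by
  unfold signFlip; split_ifs <;> simp

lemma signFlip_smul {R : Type*} [Ring R] [AddCommGroup M] [Module R M] (σ : ι → Bool)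
    (c : ι → R) (y : ι → M) (i : ι) :
    signFlip σ c i • y i = signFlip σ (fun j => c j • y j) i := by
  unfold signFlip; split_ifs <;> simp

lemma sum_signFlip_update_of_notMem [AddCommMonoid M] [Neg M] [DecidableEq ι] {s : Finset ι}
    {a : ι} (ha : a ∉ s) (σ : ι → Bool) (b : Bool) (x : ι → M) :
    ∑ i ∈ s, signFlip (Function.update σ a b) x i = ∑ i ∈ s, signFlip σ x i :=
  Finset.sum_congr rfl fun i hi => by
    rw [signFlip, signFlip, Function.update_of_ne (ne_of_mem_of_not_mem hi ha)]

/-- `|x| + y = (x + y) ⊔ (-x + y)` peels off one coordinate at a time. -/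
lemma sum_abs_le_of_forall_sum_signFlip_le [Lattice M] [AddCommGroup M] [IsOrderedAddMonoid M]
    (s : Finset ι) (x : ι → M) {B : M} (h : ∀ σ : ι → Bool, ∑ i ∈ s, signFlip σ x i ≤ B) :
    ∑ i ∈ s, |x i| ≤ B := by
  classical
  induction s using Finset.induction_on generalizing B with
  | empty => simpa using h fun _ => true
  | insert a s ha ih =>
    rw [Finset.sum_insert ha, ← le_sub_iff_add_le']
    refine ih fun σ => le_sub_iff_add_le'.mpr ?_
    rw [abs, sup_add]
    refine sup_le ?_ ?_
    · have := h (Function.update σ a true)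
      rwa [Finset.sum_insert ha, sum_signFlip_update_of_notMem ha, signFlip,
        Function.update_self, if_pos rfl] at this
    · have := h (Function.update σ a false)
      rwa [Finset.sum_insert ha, sum_signFlip_update_of_notMem ha, signFlip,
        Function.update_self, if_neg Bool.false_ne_true] at this

end SignFlip

section Zonotope

variable {J E : Type*} [Fintype J] [NormedAddCommGroup E] [NormedSpace ℝ E]

def zonotope (w : J → ℝ) (a : J → E) : Set E :=
  Fintype.linearCombination ℝ a '' Set.univ.pi fun j => Set.Icc (-w j) (w j)

lemma convex_zonotope (w : J → ℝ) (a : J → E) : Convex ℝ (zonotope w a) :=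
  (convex_pi fun _ _ => convex_Icc _ _).linear_image _

lemma isCompact_zonotope (w : J → ℝ) (a : J → E) : IsCompact (zonotope w a) :=
  (isCompact_univ_pi fun _ => isCompact_Icc).image
    (Fintype.linearCombination ℝ a).continuous_of_finiteDimensional

lemma mem_zonotope_iff {w : J → ℝ} {a : J → E} {v : E} :
    v ∈ zonotope w a ↔ ∃ u : J → ℝ, (∀ j, |u j| ≤ w j) ∧ ∑ j, u j • a j = v := by
  simp [zonotope, Fintype.linearCombination_apply, abs_le, Pi.le_def, forall_and]

/-- `∑ⱼ wⱼ |f aⱼ|` is the support function of the zonotope, attained at `uⱼ = sign (f aⱼ) wⱼ`. -/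
lemma mem_zonotope_of_forall_le {w : J → ℝ} (hw : ∀ j, 0 ≤ w j) {a : J → E} {v : E}
    (h : ∀ f : E →L[ℝ] ℝ, f v ≤ ∑ j, w j * |f (a j)|) : v ∈ zonotope w a := by
  by_contra hv
  obtain ⟨f, s, hfZ, hfv⟩ := geometric_hahn_banach_closed_point (convex_zonotope w a)
    (isCompact_zonotope w a).isClosed hv
  have hmem : ∑ j, (SignType.sign (f (a j)) * w j) • a j ∈ zonotope w a := by
    refine mem_zonotope_iff.mpr ⟨_, fun j => ?_, rfl⟩
    rw [abs_mul, abs_of_nonneg (hw j)]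
    exact mul_le_of_le_one_left (hw j) (by rcases SignType.sign (f (a j)) with _ | _ | _ <;> simp)
  have hlt := hfZ _ hmem
  simp only [map_sum, map_smul, smul_eq_mul] at hlt
  have hsupp : ∑ j, SignType.sign (f (a j)) * w j * f (a j) = ∑ j, w j * |f (a j)| :=
    Finset.sum_congr rfl fun j _ => by rw [mul_comm _ (w j), mul_assoc, sign_mul_self]
  linarith [h f]

end Zonotope

section Transfer

variable {ι J X : Type*} [Fintype ι] [Fintype J]
  [Lattice X] [AddCommGroup X] [IsOrderedAddMonoid X] [Module ℝ X] [PosSMulMono ℝ X]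

lemma dual_apply_eq_dotProduct [DecidableEq ι] (f : (ι → ℝ) →L[ℝ] ℝ) (v : ι → ℝ) :
    f v = v ⬝ᵥ fun i => f fun j => if i = j then 1 else 0 :=
  LinearMap.pi_apply_eq_sum_univ f.toLinearMap v

lemma sum_smul_le_of_forall_dotProduct_le {w : J → ℝ} (hw : ∀ j, 0 ≤ w j) {a : J → ι → ℝ}
    {v : ι → ℝ} (h : ∀ t, v ⬝ᵥ t ≤ ∑ j, w j * |a j ⬝ᵥ t|) (y : ι → X) :
    ∑ i, v i • y i ≤ ∑ j, w j • |∑ i, a j i • y i| := by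
  classical
  obtain ⟨u, hu, rfl⟩ := mem_zonotope_iff.mp <| mem_zonotope_of_forall_le (a := a) (v := v) hw
    fun f => by
      have hf := dual_apply_eq_dotProduct f
      calc f v ≤ _ := (hf v).trans_le (h _)
        _ = ∑ j, w j * |f (a j)| := Finset.sum_congr rfl fun j _ => by rw [hf (a j)]
  calc ∑ i, (∑ j, u j • a j) i • y i = ∑ j, u j • ∑ i, a j i • y i := by
        simp only [Finset.sum_apply, Pi.smul_apply, smul_eq_mul, Finset.sum_smul, mul_smul,
          Finset.smul_sum]
        exact Finset.sum_comm
    _ ≤ ∑ j, w j • |∑ i, a j i • y i| := Finset.sum_le_sum fun j _ => by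
        calc u j • _ ≤ |u j| • |∑ i, a j i • y i| :=
              abs_smul_of_posSMulMono (u j) (∑ i, a j i • y i) ▸ le_abs_self _
          _ ≤ w j • |∑ i, a j i • y i| := smul_le_smul_of_nonneg_right (hu j) (abs_nonneg _)

theorem sum_abs_smul_le_of_forall_sum_abs_mul_abs_le {w : J → ℝ} (hw : ∀ j, 0 ≤ w j)
    {a : J → ι → ℝ} {c : ι → ℝ} (h : ∀ t, ∑ i, |c i| * |t i| ≤ ∑ j, w j * |a j ⬝ᵥ t|)
    (y : ι → X) : ∑ i, |c i • y i| ≤ ∑ j, w j • |∑ i, a j i • y i| := by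
  refine sum_abs_le_of_forall_sum_signFlip_le _ _ fun σ => ?_
  simp only [← signFlip_smul]
  refine sum_smul_le_of_forall_dotProduct_le hw (fun t => le_trans ?_ (h t)) y
  exact Finset.sum_le_sum fun i _ => (le_abs_self _).trans_eq (by rw [abs_mul, abs_signFlip])

end Transfer

section Khintchine

lemma sum_signFlip_succ {m : ℕ} (F : ℝ → ℝ) (s : Fin (m + 1) → ℝ) :
    ∑ σ : Fin (m + 1) → Bool, F (∑ i, signFlip σ s i) =
      ∑ τ : Fin m → Bool, (F (s 0 + ∑ i, signFlip τ (Fin.tail s) i) +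
        F (-s 0 + ∑ i, signFlip τ (Fin.tail s) i)) := by
  rw [← (Fin.consEquiv fun _ => Bool).sum_comp, Fintype.sum_prod_type, Fintype.sum_bool]
  simp [Fin.sum_univ_succ, signFlip, Fin.consEquiv, Fin.tail, Finset.sum_add_distrib]

lemma sum_sq_sum_signFlip {m : ℕ} (s : Fin m → ℝ) :
    ∑ σ : Fin m → Bool, (∑ i, signFlip σ s i) ^ 2 = 2 ^ m * ∑ i, s i ^ 2 := by
  induction m with
  | zero => simp
  | succ m ih =>
    have hpair (x : ℝ) : (s 0 + x) ^ 2 + (-s 0 + x) ^ 2 = 2 * s 0 ^ 2 + 2 * x ^ 2 := by ring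
    simp only [sum_signFlip_succ (· ^ 2), hpair, Finset.sum_add_distrib, ← Finset.mul_sum, ih,
      Finset.sum_const, Finset.card_univ, Fintype.card_fun, Fintype.card_bool, Fintype.card_fin,
      nsmul_eq_mul, Fin.sum_univ_succ (fun i => s i ^ 2), Fin.tail]
    push_cast
    ring

lemma sum_pow_four_sum_signFlip_le {m : ℕ} (s : Fin m → ℝ) :
    ∑ σ : Fin m → Bool, (∑ i, signFlip σ s i) ^ 4 ≤ 3 * 2 ^ m * (∑ i, s i ^ 2) ^ 2 := by
  induction m with
  | zero => simp
  | succ m ih =>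
    have hpair (x : ℝ) :
        (s 0 + x) ^ 4 + (-s 0 + x) ^ 4 = 2 * s 0 ^ 4 + 12 * s 0 ^ 2 * x ^ 2 + 2 * x ^ 4 := by
      ring
    simp only [sum_signFlip_succ (· ^ 4), hpair, Finset.sum_add_distrib, ← Finset.mul_sum,
      sum_sq_sum_signFlip, Finset.sum_const, Finset.card_univ, Fintype.card_fun,
      Fintype.card_bool, Fintype.card_fin, nsmul_eq_mul, Fin.sum_univ_succ (fun i => s i ^ 2)]
    have hm := ih (Fin.tail s)
    simp only [Fin.tail] at hm ⊢
    push_cast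
    rw [pow_succ (2 : ℝ) m]
    nlinarith [mul_nonneg (pow_nonneg zero_le_two m : (0 : ℝ) ≤ 2 ^ m)
      (pow_nonneg (sq_nonneg (s 0)) 2)]

/-- Khintchine's inequality with constant `16 / 9`. With `q = ‖s‖₂`, sum the pointwise bound
`12 q² u² - u⁴ ≤ 16 q³ u` (that is, `u (u - 2q)² (u + 4q) ≥ 0`) over `u = |∑ ±sᵢ|` and insert the
second and fourth moments. -/
theorem sqrt_sum_sq_le_sum_abs_sum_signFlip {m : ℕ} (s : Fin m → ℝ) :
    9 * 2 ^ m * √(∑ i, s i ^ 2) ≤ 16 * ∑ σ : Fin m → Bool, |∑ i, signFlip σ s i| := by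
  set q := √(∑ i, s i ^ 2)
  set S : (Fin m → Bool) → ℝ := fun σ => ∑ i, signFlip σ s i
  have hq0 : 0 ≤ q := Real.sqrt_nonneg _
  have hq2 : q ^ 2 = ∑ i, s i ^ 2 := Real.sq_sqrt (Finset.sum_nonneg fun i _ => sq_nonneg _)
  have hpoint (σ) : 12 * q ^ 2 * S σ ^ 2 - S σ ^ 4 ≤ 16 * q ^ 3 * |S σ| := by
    have hu := abs_nonneg (S σ)
    have hfactor := mul_nonneg (mul_nonneg hu (sq_nonneg (|S σ| - 2 * q)))
      (add_nonneg hu (mul_nonneg zero_le_four hq0))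
    rw [show S σ ^ 4 = (S σ ^ 2) ^ 2 by ring, ← sq_abs (S σ)]
    nlinarith
  have hsum := Finset.sum_le_sum fun σ (_ : σ ∈ Finset.univ) => hpoint σ
  rw [Finset.sum_sub_distrib, ← Finset.mul_sum, ← Finset.mul_sum, sum_sq_sum_signFlip] at hsum
  have h4 := sum_pow_four_sum_signFlip_le s
  rcases hq0.eq_or_lt with hq | hq
  · rw [← hq, mul_zero]
    positivity
  · refine le_of_mul_le_mul_right ?_ (pow_pos hq 3)
    rw [← hq2] at hsum h4
    nlinarith

lemma sum_abs_mul_mul_abs_le {m : ℕ} (a b t : Fin m → ℝ) :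
    ∑ i, |a i * b i| * |t i| ≤
      ∑ σ : Fin m → Bool, 16 * √(∑ i, a i ^ 2) / (9 * 2 ^ m) * |signFlip σ b ⬝ᵥ t| := by
  have hdot (σ : Fin m → Bool) : signFlip σ b ⬝ᵥ t = ∑ i, signFlip σ (fun i => b i * t i) i := by
    simp only [dotProduct, ← smul_eq_mul, signFlip_smul]
  calc ∑ i, |a i * b i| * |t i| = ∑ i, |a i| * |b i * t i| := by simp only [abs_mul, mul_assoc]
    _ ≤ √(∑ i, |a i| ^ 2) * √(∑ i, |b i * t i| ^ 2) := Real.sum_mul_le_sqrt_mul_sqrt _ _ _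
    _ = √(∑ i, a i ^ 2) * √(∑ i, (b i * t i) ^ 2) := by simp only [sq_abs]
    _ ≤ √(∑ i, a i ^ 2) * (16 / (9 * 2 ^ m) *
          ∑ σ : Fin m → Bool, |∑ i, signFlip σ (fun i => b i * t i) i|) := by
        gcongr
        rw [div_mul_eq_mul_div, le_div_iff₀ (by positivity)]
        linarith [sqrt_sum_sq_le_sum_abs_sum_signFlip fun i => b i * t i]
    _ = _ := by simp only [hdot, Finset.mul_sum]; ring_nf

end Khintchine

theorem norm_sum_smul_abs_le_of_abs_eq_abs_mul {X : Type*} [NormedAddCommGroup X] [Lattice X]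
    [HasSolidNorm X] [IsOrderedAddMonoid X] [NormedSpace ℝ X] {m : ℕ} {a b c : Fin m → ℝ}
    (hc : ∀ i, |c i| = |a i * b i|) (y : Fin m → X) {M : ℝ}
    (hM : ∀ σ, ‖∑ i, signFlip σ b i • y i‖ ≤ M) :
    ‖∑ i, c i • |y i|‖ ≤ 16 / 9 * √(∑ i, a i ^ 2) * M := by
  have : PosSMulMono ℝ X := posSMulMono_of_closedIciTopology
  set W := 16 * √(∑ i, a i ^ 2) / (9 * 2 ^ m) with hW_def
  have hW : 0 ≤ W := by positivity
  have hlattice : ∑ i, |c i • y i| ≤ ∑ σ : Fin m → Bool, W • |∑ i, signFlip σ b i • y i| :=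
    sum_abs_smul_le_of_forall_sum_abs_mul_abs_le (fun _ => hW)
      (fun t => by simpa only [hc] using sum_abs_mul_mul_abs_le a b t) y
  calc ‖∑ i, c i • |y i|‖ ≤ ‖∑ σ : Fin m → Bool, W • |∑ i, signFlip σ b i • y i|‖ :=
        norm_le_norm_of_abs_le_abs <|
          (abs_sum_smul_abs_le c y).trans (hlattice.trans (le_abs_self _))
    _ ≤ ∑ σ : Fin m → Bool, W * M := by
        refine (norm_sum_le _ _).trans (Finset.sum_le_sum fun σ _ => ?_)
        rw [norm_smul, norm_abs_eq_norm, Real.norm_of_nonneg hW]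
        exact mul_le_mul_of_nonneg_left (hM σ) hW
    _ = 16 / 9 * √(∑ i, a i ^ 2) * M := by
        rw [Finset.sum_const, Finset.card_univ, Fintype.card_fun, Fintype.card_bool,
          Fintype.card_fin, nsmul_eq_mul, hW_def]
        push_cast
        field_simp

lemma lp.norm_sum_smul_single_one {p : ENNReal} [Fact (1 ≤ p)] (hp : 0 < p.toReal) {m : ℕ}
    (a : Fin m → ℝ) :
    ‖(∑ i : Fin m, a i • lp.single p (i : ℕ) (1 : ℝ) : lp (fun _ : ℕ => ℝ) p)‖ =
      (∑ i, |a i| ^ p.toReal) ^ (1 / p.toReal) := by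
  let a' : ℕ → ℝ := fun n => if h : n < m then a ⟨n, h⟩ else 0
  have ha' : (∑ i : Fin m, a i • lp.single p (i : ℕ) (1 : ℝ) : lp (fun _ : ℕ => ℝ) p) =
      ∑ n ∈ Finset.range m, lp.single p n (a' n) := by
    rw [← Fin.sum_univ_eq_sum_range (fun n => lp.single p n (a' n))]
    simp [a', ← lp.single_smul]
  have hpow := lp.norm_sum_single hp a' (Finset.range m)
  rw [← Fin.sum_univ_eq_sum_range (fun n => ‖a' n‖ ^ p.toReal)] at hpow
  simp only [a', Fin.is_lt, dif_pos, Fin.eta, Real.norm_eq_abs] at hpow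
  rw [ha', ← hpow, one_div, Real.rpow_rpow_inv (norm_nonneg _) hp.ne']

lemma rpow_div_two_mul_rpow_div {p r x : ℝ} (hp : 0 < p) (hr : 1 / r = 1 / 2 + 1 / p)
    (hx : 0 ≤ x) : x ^ (r / 2) * x ^ (r / p) = x := by
  have hr0 : r ≠ 0 := by
    rintro rfl
    rw [div_zero] at hr
    linarith [one_div_pos.mpr hp]
  have hsum : r / 2 + r / p = 1 := by
    rw [div_eq_mul_one_div r 2, div_eq_mul_one_div r p, ← mul_add, ← hr, mul_one_div_cancel hr0]
  rw [← Real.rpow_add' hx (by rw [hsum]; exact one_ne_zero), hsum, Real.rpow_one]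

/-- **Lemma 3.1 (case of ℓ_p, 2 ≤ p < ∞).** There is a constant `K ≥ 1` such that for every
real `p` with `2 ≤ p`, every Banach lattice `X`, every bounded linear operator
`T : ℓ_p → X`, and all scalars `λ_1, …, λ_m`, we have
`‖∑ λ_i • |T e_i|‖ ≤ K ‖T‖ (∑ |λ_i|^r)^(1/r)` where `1/r = 1/2 + 1/p`.
(The hypothesis `Fact (1 ≤ ENNReal.ofReal p)` is automatic from `2 ≤ p`; it is the
instance Mathlib needs to endow `ℓ_p` with its norm.) -/
theorem fbl_lp_upper_estimate :
    ∃ K : ℝ, 1 ≤ K ∧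
      ∀ (p : ℝ), 2 ≤ p →
      ∀ (r : ℝ), 1 / r = 1 / 2 + 1 / p →
      ∀ [Fact (1 ≤ ENNReal.ofReal p)],
      ∀ (X : Type) [NormedAddCommGroup X] [Lattice X] [HasSolidNorm X]
        [IsOrderedAddMonoid X] [NormedSpace ℝ X]
        [CompleteSpace X],
      ∀ (T : lp (fun _ : ℕ => ℝ) (ENNReal.ofReal p) →L[ℝ] X)
        (m : ℕ) (lam : Fin m → ℝ),
        ‖∑ i, lam i • |T (lp.single (ENNReal.ofReal p) (i : ℕ) (1 : ℝ))|‖ ≤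
          K * ‖T‖ * (∑ i, |lam i| ^ r) ^ (1 / r) := by
  refine ⟨16 / 9, by norm_num, fun p hp r hr _ X _ _ _ _ _ _ T m lam => ?_⟩
  have hp0 : 0 < p := by linarith
  have hpReal : (ENNReal.ofReal p).toReal = p := ENNReal.toReal_ofReal hp0.le
  set S := ∑ i, |lam i| ^ r
  have ha : ∑ i, (|lam i| ^ (r / 2)) ^ 2 = S := Finset.sum_congr rfl fun i _ => by
    rw [← Real.rpow_natCast, ← Real.rpow_mul (abs_nonneg _)]
    norm_num
  have hb : ∑ i, |(|lam i| ^ (r / p))| ^ p = S := Finset.sum_congr rfl fun i _ => by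
    rw [abs_of_nonneg (by positivity), ← Real.rpow_mul (abs_nonneg _), div_mul_cancel₀ _ hp0.ne']
  have hroot : √S * S ^ (1 / p) = S ^ (1 / r) := by
    rw [Real.sqrt_eq_rpow, ← Real.rpow_add' (by positivity) (by positivity), ← hr]
  calc _ ≤ 16 / 9 * √(∑ i, (|lam i| ^ (r / 2)) ^ 2) * (‖T‖ * S ^ (1 / p)) := by
        refine norm_sum_smul_abs_le_of_abs_eq_abs_mul (b := fun i => |lam i| ^ (r / p))
          (fun i => ?_) _ fun σ => ?_
        · rw [rpow_div_two_mul_rpow_div hp0 hr (abs_nonneg _), abs_abs]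
        · simp only [← map_smul, ← map_sum]
          refine T.le_opNorm_of_le (le_of_eq ?_)
          simp only [lp.norm_sum_smul_single_one (by rwa [hpReal]), abs_signFlip, hpReal, hb]
    _ = 16 / 9 * ‖T‖ * S ^ (1 / r) := by rw [ha, ← hroot]; ring
end

section
/- There exists a constant K ≥ 1 (one may take Grothendieck's constant K_G) such that for every Banach lattice X, every bounded linear operator T : c_0 → X, every m ∈ ℕ and all real scalars λ_1, …, λ_m, one has ‖∑_{i=1}^m λ_i |T e_i|‖_X ≤ K · ‖T‖ · (∑_{i=1}^m λ_i^2)^{1/2}, where e_i denotes the i-th canonical basis vector of c_0. -/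
/-!
Let `x i = T (e i)` and, for a sign vector `σ ∈ {±1}^m`, `y σ = ∑ σ i • x i`; then
`‖y σ‖ ≤ ‖T‖` because `‖∑ σ i • e i‖ ≤ 1` in `c₀`. Khintchine's inequality
`‖a‖₂ ≤ √3 · 𝔼_σ |∑ σ i a i|`, obtained from the second and fourth moments, says by Hahn–Banach
in `ℝ^m` that every `c` with `‖c‖₂ ≤ 1/√3` can be written `c i = 𝔼_σ (s σ · σ i)` with `|s| ≤ 1`.
Taking `c = (± |λ i|) / (√3 ‖λ‖₂)` gives `∑ ± |λ i| • x i ≤ √3 ‖λ‖₂ · 𝔼_σ |y σ|` for every choice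
of signs, and the supremum of the left side over all signs is `∑ |λ i| • |x i|`. So `K = √3`.
-/

open Finset Filter Topology

lemma dyadic_smul_nonneg {𝕜 X : Type*} [Field 𝕜] [CharZero 𝕜] [AddCommGroup X] [Lattice X]
    [IsOrderedAddMonoid X] [Module 𝕜 X] {x : X} (hx : 0 ≤ x) (n k : ℕ) :
    0 ≤ ((k : 𝕜) / 2 ^ n) • x := by
  induction n generalizing k with
  | zero =>
    rw [pow_zero, div_one, Nat.cast_smul_eq_nsmul]
    exact nsmul_nonneg hx k
  | succ n ih =>
    refine nsmul_two_semiclosed ?_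
    rw [two_nsmul, ← add_smul]
    convert ih k using 2
    field_simp
    ring

section NormedLattice

variable {X : Type*} [NormedAddCommGroup X] [Lattice X] [HasSolidNorm X] [IsOrderedAddMonoid X]
  [NormedSpace ℝ X]

/-- The order of a normed lattice is not assumed to be compatible with the scalar action; this
follows from `0 ≤ 2 • y → 0 ≤ y` and the closedness of the positive cone. -/
lemma HasSolidNorm.smul_nonneg {r : ℝ} {x : X} (hr : 0 ≤ r) (hx : 0 ≤ x) : 0 ≤ r • x := by
  have hdyadic : Tendsto (fun n : ℕ => (⌊r * 2 ^ n⌋₊ / 2 ^ n : ℝ)) atTop (𝓝 r) :=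
    (tendsto_nat_floor_mul_div_atTop hr).comp (tendsto_pow_atTop_atTop_of_one_lt one_lt_two)
  exact isClosed_nonneg.mem_of_tendsto (hdyadic.smul_const x)
    (Eventually.of_forall fun n => dyadic_smul_nonneg hx n _)

instance HasSolidNorm.isOrderedModule : IsOrderedModule ℝ X :=
  .of_smul_nonneg fun _ hr _ hx => HasSolidNorm.smul_nonneg hr hx

end NormedLattice

section LatticeModule

variable {𝕜 X : Type*} [Field 𝕜] [LinearOrder 𝕜] [IsStrictOrderedRing 𝕜]
  [AddCommGroup X] [Lattice X] [Module 𝕜 X] [PosSMulMono 𝕜 X]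

lemma abs_smul_of_nonneg [IsOrderedAddMonoid X] {c : 𝕜} (hc : 0 ≤ c) (x : X) :
    |c • x| = c • |x| := by
  rcases hc.eq_or_lt with rfl | hc
  · simp
  · rw [abs, abs, ← smul_neg]
    exact ((OrderIso.smulRight hc).map_sup x (-x)).symm

lemma smul_le_abs_smul_abs (c : 𝕜) (x : X) : c • x ≤ |c| • |x| := by
  rcases le_total 0 c with hc | hc
  · rw [abs_of_nonneg hc]
    exact smul_le_smul_of_nonneg_left (le_abs_self x) hc
  · rw [abs_of_nonpos hc, ← neg_smul_neg]
    exact smul_le_smul_of_nonneg_left (neg_le_abs x) (neg_nonneg.mpr hc)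

end LatticeModule

lemma sum_abs_le_of_forall_signs {X ι : Type*} [AddCommGroup X] [Lattice X]
    [IsOrderedAddMonoid X] [DecidableEq ι] (s : Finset ι) (w : ι → X) (B : X)
    (h : ∀ t : ι → Bool, ∑ i ∈ s, (if t i then w i else -w i) ≤ B) :
    ∑ i ∈ s, |w i| ≤ B := by
  induction s using Finset.induction_on generalizing B with
  | empty => simpa using h fun _ => true
  | insert a s ha ih =>
    have key : ∀ b : Bool, (if b then w a else -w a) + ∑ i ∈ s, |w i| ≤ B := fun b =>
      le_sub_iff_add_le'.mp <| ih _ fun t => le_sub_iff_add_le'.mpr <| by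
        convert h (Function.update t a b) using 1
        rw [sum_insert ha, Function.update_self]
        congr 1
        refine sum_congr rfl fun i hi => ?_
        rw [Function.update_of_ne (ne_of_mem_of_not_mem hi ha)]
    rw [sum_insert ha, abs, sup_add]
    exact sup_le (by simpa using key true) (by simpa using key false)

def rademacher {ι : Type*} (σ : ι → Bool) (i : ι) : ℝ := if σ i then 1 else -1

def rademacherSum {m : ℕ} (a : Fin m → ℝ) (σ : Fin m → Bool) : ℝ := ∑ i, rademacher σ i * a i

lemma rademacher_smul {ι X : Type*} [AddCommGroup X] [Module ℝ X] (σ : ι → Bool) (i : ι) (x : X) :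
    rademacher σ i • x = if σ i then x else -x := by
  unfold rademacher; split_ifs <;> simp

lemma abs_rademacher {ι : Type*} (σ : ι → Bool) (i : ι) : |rademacher σ i| = 1 := by
  unfold rademacher; split_ifs <;> norm_num

lemma rademacher_sq {ι : Type*} (σ : ι → Bool) (i : ι) : rademacher σ i ^ 2 = 1 := by
  unfold rademacher; split_ifs <;> norm_num

lemma sum_cube_succ {m : ℕ} (F : (Fin (m + 1) → Bool) → ℝ) :
    ∑ σ, F σ = ∑ τ : Fin m → Bool, (F (Fin.cons true τ) + F (Fin.cons false τ)) := by
  rw [← (Fin.consEquiv fun _ => Bool).sum_comp F, Fintype.sum_prod_type, Fintype.sum_bool,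
    ← sum_add_distrib]
  rfl

lemma rademacherSum_cons {m : ℕ} (a : Fin (m + 1) → ℝ) (b : Bool) (τ : Fin m → Bool) :
    rademacherSum a (Fin.cons b τ) = (if b then a 0 else -a 0) + rademacherSum (Fin.tail a) τ := by
  cases b <;> simp [rademacherSum, rademacher, Fin.sum_univ_succ, Fin.tail]

lemma sum_rademacherSum_sq {m : ℕ} (a : Fin m → ℝ) :
    ∑ σ, rademacherSum a σ ^ 2 = 2 ^ m * ∑ i, a i ^ 2 := by
  induction m with
  | zero => simp [rademacherSum]
  | succ m ih =>
    simp only [sum_cube_succ, rademacherSum_cons, if_true, Bool.false_eq_true, if_false]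
    have hsplit : ∀ τ, (a 0 + rademacherSum (Fin.tail a) τ) ^ 2 +
        (-a 0 + rademacherSum (Fin.tail a) τ) ^ 2 =
        2 * a 0 ^ 2 + 2 * rademacherSum (Fin.tail a) τ ^ 2 := fun τ => by ring
    simp only [hsplit, sum_add_distrib, ← mul_sum, ih, Fin.sum_univ_succ (fun i => a i ^ 2)]
    simp only [sum_const, card_univ, Fintype.card_pi, Fintype.card_bool, prod_const,
      Fintype.card_fin, nsmul_eq_mul, Nat.cast_pow, Nat.cast_ofNat, Fin.tail]
    ring

lemma sum_rademacherSum_pow_four_le {m : ℕ} (a : Fin m → ℝ) :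
    ∑ σ, rademacherSum a σ ^ 4 ≤ 3 * 2 ^ m * (∑ i, a i ^ 2) ^ 2 := by
  induction m with
  | zero => simp [rademacherSum]
  | succ m ih =>
    simp only [sum_cube_succ, rademacherSum_cons, if_true, Bool.false_eq_true, if_false]
    have hsplit : ∀ τ, (a 0 + rademacherSum (Fin.tail a) τ) ^ 4 +
        (-a 0 + rademacherSum (Fin.tail a) τ) ^ 4 = 2 * a 0 ^ 4 +
          12 * a 0 ^ 2 * rademacherSum (Fin.tail a) τ ^ 2 +
          2 * rademacherSum (Fin.tail a) τ ^ 4 := fun τ => by ring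
    simp only [hsplit, sum_add_distrib, ← mul_sum, sum_rademacherSum_sq, sum_const, card_univ]
    have h4 := ih (Fin.tail a)
    rw [Fin.sum_univ_succ (fun i => a i ^ 2)]
    simp only [Fintype.card_fun, Fintype.card_bool, Fintype.card_fin, nsmul_eq_mul, Nat.cast_pow,
      Nat.cast_ofNat, Fin.tail, pow_succ (2 : ℝ) m] at h4 ⊢
    have hN : (0 : ℝ) ≤ 2 ^ m := by positivity
    nlinarith [mul_nonneg hN (pow_nonneg (sq_nonneg (a 0)) 2)]

lemma sum_sq_pow_three_le {ι : Type*} (s : Finset ι) (g : ι → ℝ) :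
    (∑ i ∈ s, g i ^ 2) ^ 3 ≤ (∑ i ∈ s, |g i|) ^ 2 * ∑ i ∈ s, g i ^ 4 := by
  have h13 : (∑ i ∈ s, g i ^ 2) ^ 2 ≤ (∑ i ∈ s, |g i|) * ∑ i ∈ s, |g i| ^ 3 :=
    sum_sq_le_sum_mul_sum_of_sq_le_mul s (fun i _ => abs_nonneg _) (fun i _ => by positivity)
      fun i _ => by rw [← pow_succ', Even.pow_abs ⟨2, rfl⟩, ← pow_mul]
  have h24 : (∑ i ∈ s, |g i| ^ 3) ^ 2 ≤ (∑ i ∈ s, g i ^ 2) * ∑ i ∈ s, g i ^ 4 :=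
    sum_sq_le_sum_mul_sum_of_sq_le_mul s (fun i _ => by positivity) (fun i _ => by positivity)
      fun i _ => by rw [← pow_mul, Even.pow_abs ⟨3, rfl⟩, ← pow_add]
  rcases (sum_nonneg fun i _ => sq_nonneg (g i) : 0 ≤ ∑ i ∈ s, g i ^ 2).eq_or_lt with h0 | hpos
  · rw [← h0, zero_pow three_ne_zero]
    positivity
  · refine le_of_mul_le_mul_left ?_ hpos
    calc (∑ i ∈ s, g i ^ 2) * (∑ i ∈ s, g i ^ 2) ^ 3 = ((∑ i ∈ s, g i ^ 2) ^ 2) ^ 2 := by ring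
      _ ≤ ((∑ i ∈ s, |g i|) * ∑ i ∈ s, |g i| ^ 3) ^ 2 := by gcongr
      _ = (∑ i ∈ s, |g i|) ^ 2 * (∑ i ∈ s, |g i| ^ 3) ^ 2 := by ring
      _ ≤ (∑ i ∈ s, |g i|) ^ 2 * ((∑ i ∈ s, g i ^ 2) * ∑ i ∈ s, g i ^ 4) := by gcongr
      _ = _ := by ring

lemma khintchine_l1_l2 {m : ℕ} (a : Fin m → ℝ) :
    (2 ^ m) ^ 2 * ∑ i, a i ^ 2 ≤ 3 * (∑ σ, |rademacherSum a σ|) ^ 2 := by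
  have hlyap := sum_sq_pow_three_le univ (rademacherSum a)
  rw [sum_rademacherSum_sq] at hlyap
  have h4 := sum_rademacherSum_pow_four_le a
  set A := ∑ i, a i ^ 2
  set S := ∑ σ, |rademacherSum a σ|
  have hA0 : 0 ≤ A := sum_nonneg fun i _ => sq_nonneg (a i)
  rcases hA0.eq_or_lt with h0 | hA
  · rw [← h0, mul_zero]
    positivity
  · have hNA : 0 < 2 ^ m * A ^ 2 := by positivity
    refine le_of_mul_le_mul_left ?_ hNA
    calc 2 ^ m * A ^ 2 * ((2 ^ m) ^ 2 * A) = (2 ^ m * A) ^ 3 := by ring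
      _ ≤ S ^ 2 * ∑ σ, rademacherSum a σ ^ 4 := hlyap
      _ ≤ S ^ 2 * (3 * 2 ^ m * A ^ 2) := by gcongr
      _ = _ := by ring

lemma exists_bounded_linearCombination_eq {Ω ι : Type*} [Fintype Ω] [Fintype ι]
    (v : Ω → ι → ℝ) (c : ι → ℝ) {δ : ℝ} (hδ : 0 ≤ δ)
    (h : ∀ a : ι → ℝ, ∑ i, c i * a i ≤ δ * ∑ ω, |∑ i, v ω i * a i|) :
    ∃ s : Ω → ℝ, (∀ ω, |s ω| ≤ δ) ∧ ∑ ω, s ω • v ω = c := by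
  classical
  set Φ := Fintype.linearCombination ℝ v
  set cube : Set (Ω → ℝ) := Set.univ.pi fun _ => Set.Icc (-δ) δ
  have hconv : Convex ℝ (Φ '' cube) := (convex_pi fun _ _ => convex_Icc _ _).linear_image Φ
  have hclosed : IsClosed (Φ '' cube) :=
    ((isCompact_univ_pi fun _ => isCompact_Icc).image Φ.continuous_of_finiteDimensional).isClosed
  by_contra hne
  have hc : c ∉ Φ '' cube := by
    rintro ⟨s, hs, rfl⟩
    exact hne ⟨s, fun ω => abs_le.mpr (hs ω (Set.mem_univ ω)), rfl⟩
  -- Test the separating functional `f = ⟨·, a⟩` on the sign vector of `σ ↦ ⟨v σ, a⟩`.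
  obtain ⟨f, u, hfS, hfc⟩ := geometric_hahn_banach_closed_point hconv hclosed hc
  set a : ι → ℝ := fun i => f fun j => if i = j then 1 else 0
  have hf : ∀ w, f w = ∑ i, w i * a i := fun w => by
    simpa using (f : (ι → ℝ) →ₗ[ℝ] ℝ).pi_apply_eq_sum_univ w
  set g : Ω → ℝ := fun ω => ∑ i, v ω i * a i
  set s₀ : Ω → ℝ := fun ω => δ * SignType.sign (g ω)
  have hs₀ : s₀ ∈ cube := fun ω _ => by
    rcases lt_trichotomy (g ω) 0 with h | h | h <;> simp [s₀, h, hδ]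
  have hfs₀ : f (Φ s₀) = δ * ∑ ω, |g ω| := by
    rw [hf, Fintype.linearCombination_apply, mul_sum]
    simp only [Finset.sum_apply, Pi.smul_apply, smul_eq_mul, sum_mul]
    rw [sum_comm]
    refine sum_congr rfl fun ω _ => ?_
    rw [← sign_mul_self (g ω), mul_sum, mul_sum]
    exact sum_congr rfl fun i _ => by ring
  have := hfS _ ⟨s₀, hs₀, rfl⟩
  linarith [h a, hf c]

lemma exists_rademacher_representation {m : ℕ} (c : Fin m → ℝ) {ρ : ℝ} (hρ : 0 ≤ ρ)
    (hc : 3 * ∑ i, c i ^ 2 ≤ ρ ^ 2) :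
    ∃ s : (Fin m → Bool) → ℝ, (∀ σ, |s σ| ≤ ρ / 2 ^ m) ∧
      ∀ i, ∑ σ, s σ * rademacher σ i = c i := by
  have hN : (0 : ℝ) < 2 ^ m := by positivity
  obtain ⟨s, hs, hsum⟩ :=
    exists_bounded_linearCombination_eq rademacher c (δ := ρ / 2 ^ m) (by positivity) fun a => by
      set S := ∑ σ, |rademacherSum a σ|
      have hcs := sum_mul_sq_le_sq_mul_sq univ c a
      have hkh := khintchine_l1_l2 a
      have hsq : (2 ^ m * ∑ i, c i * a i) ^ 2 ≤ (ρ * S) ^ 2 := by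
        calc (2 ^ m * ∑ i, c i * a i) ^ 2 ≤ (∑ i, c i ^ 2) * ((2 ^ m) ^ 2 * ∑ i, a i ^ 2) := by
              rw [mul_pow, mul_left_comm]; gcongr
          _ ≤ (∑ i, c i ^ 2) * (3 * S ^ 2) := by gcongr
          _ ≤ (ρ * S) ^ 2 := by nlinarith [sq_nonneg S]
      change _ ≤ ρ / 2 ^ m * S
      rw [div_mul_eq_mul_div, le_div_iff₀ hN, mul_comm]
      exact (abs_le_of_sq_le_sq hsq (by positivity)).trans' (le_abs_self _)
  exact ⟨s, hs, fun i => by simpa using congrFun hsum i⟩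

lemma sum_abs_smul_abs_le {X : Type*} [AddCommGroup X] [Lattice X] [IsOrderedAddMonoid X]
    [Module ℝ X] [PosSMulMono ℝ X] {m : ℕ} (x : Fin m → X) (μ : Fin m → ℝ) {ρ : ℝ} (hρ : 0 ≤ ρ)
    (hμ : 3 * ∑ i, μ i ^ 2 ≤ ρ ^ 2) :
    ∑ i, |μ i| • |x i| ≤ (ρ / 2 ^ m) • ∑ σ, |∑ i, rademacher σ i • x i| := by
  classical
  refine (sum_congr rfl fun i _ => (abs_smul_of_nonneg (abs_nonneg (μ i)) (x i)).symm).trans_le ?_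
  refine sum_abs_le_of_forall_signs _ _ _ fun t => ?_
  obtain ⟨s, hs, hsc⟩ := exists_rademacher_representation (fun i => rademacher t i * |μ i|) hρ
    (by simpa [mul_pow, rademacher_sq] using hμ)
  calc ∑ i, (if t i then |μ i| • x i else -(|μ i| • x i))
      = ∑ i, (∑ σ, s σ * rademacher σ i) • x i := by
        simp only [hsc, mul_smul, rademacher_smul]
    _ = ∑ σ, s σ • ∑ i, rademacher σ i • x i := by
        simp only [sum_smul, smul_sum, mul_smul]
        exact sum_comm
    _ ≤ ∑ σ, (ρ / 2 ^ m) • |∑ i, rademacher σ i • x i| := by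
        refine sum_le_sum fun σ _ => (smul_le_abs_smul_abs _ _).trans ?_
        exact smul_le_smul_of_nonneg_right (hs σ) (abs_nonneg _)
    _ = _ := (smul_sum ..).symm

lemma ZeroAtInftyContinuousMap.sum_apply {α β ι : Type*} [TopologicalSpace α] [TopologicalSpace β]
    [AddCommMonoid β] [ContinuousAdd β] (s : Finset ι) (f : ι → ZeroAtInftyContinuousMap α β)
    (x : α) : (∑ i ∈ s, f i) x = ∑ i ∈ s, f i x :=
  map_sum ({ toFun := fun g => g x, map_zero' := rfl, map_add' := fun _ _ => rfl } :
    ZeroAtInftyContinuousMap α β →+ β) f s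

lemma ZeroAtInftyContinuousMap.norm_sum_smul_le_one {m : ℕ} (e : ℕ → ZeroAtInftyContinuousMap ℕ ℝ)
    (he : ∀ i j : ℕ, e i j = if j = i then 1 else 0) (b : Fin m → ℝ) (hb : ∀ i, |b i| ≤ 1) :
    ‖∑ i, b i • e i‖ ≤ 1 := by
  rw [← norm_toBCF_eq_norm]
  refine (BoundedContinuousFunction.norm_le zero_le_one).mpr fun j => ?_
  change |(∑ i, b i • e i) j| ≤ 1
  simp only [sum_apply, smul_apply, he, smul_eq_mul, mul_ite, mul_one, mul_zero]
  by_cases hj : j < m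
  · rw [sum_eq_single_of_mem ⟨j, hj⟩ (mem_univ _) fun i _ hi => if_neg fun h => hi (Fin.ext h.symm)]
    simpa using hb _
  · rw [sum_eq_zero fun i _ => if_neg fun h => hj (by rw [h]; exact i.isLt)]
    simp

lemma norm_sum_smul_abs_le {X : Type*} [NormedAddCommGroup X] [Lattice X] [HasSolidNorm X]
    [IsOrderedAddMonoid X] [NormedSpace ℝ X] {m : ℕ} (x : Fin m → X) (μ : Fin m → ℝ) {M : ℝ}
    (hM : ∀ σ, ‖∑ i, rademacher σ i • x i‖ ≤ M) :
    ‖∑ i, μ i • |x i|‖ ≤ √3 * M * √(∑ i, μ i ^ 2) := by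
  set ρ := √3 * √(∑ i, μ i ^ 2)
  have hρ : 0 ≤ ρ := by positivity
  have hρsq : 3 * ∑ i, μ i ^ 2 ≤ ρ ^ 2 := by
    rw [mul_pow, Real.sq_sqrt zero_le_three, Real.sq_sqrt (sum_nonneg fun i _ => sq_nonneg _)]
  set B := (ρ / 2 ^ m) • ∑ σ, |∑ i, rademacher σ i • x i|
  have hB : 0 ≤ B := smul_nonneg (by positivity) (sum_nonneg fun _ _ => abs_nonneg _)
  have hbound := sum_abs_smul_abs_le x μ hρ hρsq
  have habs : abs (∑ i, μ i • |x i|) ≤ |B| := by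
    rw [abs_of_nonneg hB, abs_le']
    constructor
    · refine (sum_le_sum fun i _ => ?_).trans hbound
      simpa using smul_le_abs_smul_abs (μ i) |x i|
    · rw [← sum_neg_distrib]
      refine (sum_le_sum fun i _ => ?_).trans hbound
      simpa using smul_le_abs_smul_abs (-μ i) |x i|
  calc ‖∑ i, μ i • |x i|‖ ≤ ‖B‖ := norm_le_norm_of_abs_le_abs habs
    _ ≤ ρ / 2 ^ m * ∑ σ : Fin m → Bool, M := by
      rw [norm_smul, Real.norm_of_nonneg (by positivity)]
      gcongr
      refine (norm_sum_le _ _).trans (sum_le_sum fun σ _ => ?_)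
      rw [norm_abs_eq_norm]
      exact hM σ
    _ = √3 * M * √(∑ i, μ i ^ 2) := by
      simp only [sum_const, card_univ, Fintype.card_fun, Fintype.card_bool, Fintype.card_fin,
        nsmul_eq_mul, Nat.cast_pow, Nat.cast_ofNat]
      field_simp
      ring

/-- **Remark after Lemma 3.1 (case of c₀).** There is a constant `K ≥ 1` such that for every
Banach lattice `X`, every bounded linear operator `T : c₀ → X`, and all scalars
`λ_1, …, λ_m`, we have `‖∑ λ_i • |T e_i|‖ ≤ K ‖T‖ (∑ λ_i^2)^(1/2)`, where
`e i` is the canonical `i`-th basis vector of `c₀ = C₀(ℕ, ℝ)`. -/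
theorem fbl_c0_upper_estimate :
    ∃ K : ℝ, 1 ≤ K ∧
      ∀ (X : Type) [NormedAddCommGroup X] [Lattice X] [HasSolidNorm X] [IsOrderedAddMonoid X] [NormedSpace ℝ X] [CompleteSpace X],
      ∀ (T : ZeroAtInftyContinuousMap ℕ ℝ →L[ℝ] X),
      ∀ (e : ℕ → ZeroAtInftyContinuousMap ℕ ℝ),
        (∀ i j : ℕ, e i j = if j = i then 1 else 0) →
      ∀ (m : ℕ) (lam : Fin m → ℝ),
        ‖∑ i, lam i • |T (e (i : ℕ))|‖ ≤
          K * ‖T‖ * (∑ i, (lam i) ^ 2) ^ ((1 : ℝ) / 2) := by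
  refine ⟨√3, Real.one_le_sqrt.mpr (by norm_num), fun X _ _ _ _ _ _ T e he m lam => ?_⟩
  rw [← Real.sqrt_eq_rpow]
  refine norm_sum_smul_abs_le _ lam fun σ => ?_
  calc ‖∑ i, rademacher σ i • T (e i)‖ = ‖T (∑ i, rademacher σ i • e i)‖ := by
        simp only [map_sum, map_smul]
    _ ≤ ‖T‖ * ‖∑ i, rademacher σ i • e i‖ := T.le_opNorm _
    _ ≤ ‖T‖ := mul_le_of_le_one_right (norm_nonneg T)
        (ZeroAtInftyContinuousMap.norm_sum_smul_le_one e he _ fun i => (abs_rademacher σ i).le)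
end

section
/- Let 2 < p < ∞ be real and let r satisfy 1/r = 1/2 + 1/p. For every m ∈ ℕ and all nonnegative real scalars λ_1, …, λ_m, there exist n ∈ ℕ and continuous linear functionals x_1*, …, x_n* on ℓ_p such that sup_{‖x‖ ≤ 1} ∑_{k=1}^n |x_k*(x)| ≤ 1 and ∑_{k=1}^n ∑_{i=1}^m λ_i |x_k*(e_i)| ≥ (∑_{i=1}^m λ_i^r)^{1/r}. -/
/-!
Average the functionals `± μ_i e_i*` over all sign patterns `ε`, i.e. take
`x_ε* = 2^{-m} ∑_i ε_i μ_i e_i*`. Orthogonality of the signs and Cauchy–Schwarz give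
`∑_ε |x_ε*(x)| ≤ (∑_i μ_i² x_i²)^{1/2}`, which is at most `‖μ‖_s ‖x‖_p` by Hölder with
`1/2 = 1/s + 1/p`, while `∑_ε |x_ε*(e_i)| = μ_i`. Since `1/r + 1/s = 1`, taking for `μ` the
norming vector of `λ` in `ℓ_r` (so `‖μ‖_s ≤ 1` and `∑_i λ_i μ_i = ‖λ‖_r`) gives the estimate.
-/

open Finset

noncomputable def boolSign (b : Bool) : ℝ := if b then 1 else -1

@[simp] lemma boolSign_mul_self (b : Bool) : boolSign b * boolSign b = 1 := by
  cases b <;> simp [boolSign]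

@[simp] lemma abs_boolSign (b : Bool) : |boolSign b| = 1 := by cases b <;> simp [boolSign]

@[simp] lemma boolSign_not (b : Bool) : boolSign (!b) = -boolSign b := by
  cases b <;> simp [boolSign]

section Rademacher

variable {ι : Type*} [Fintype ι] [DecidableEq ι]

lemma sum_boolSign_mul_boolSign (i j : ι) :
    ∑ ε : ι → Bool, boolSign (ε i) * boolSign (ε j) =
      if i = j then 2 ^ Fintype.card ι else 0 := by
  split_ifs with hij
  · simp [hij]
  · have hflip : Function.Involutive fun ε : ι → Bool => Function.update ε j (!ε j) := by
      intro ε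
      simp
    have h := Equiv.sum_comp (hflip.toPerm _) fun ε : ι → Bool => boolSign (ε i) * boolSign (ε j)
    simp only [Function.Involutive.coe_toPerm, Function.update_of_ne hij, Function.update_self,
      boolSign_not, mul_neg, sum_neg_distrib] at h
    linarith

lemma sum_sq_sum_boolSign_mul (c : ι → ℝ) :
    ∑ ε : ι → Bool, (∑ i, boolSign (ε i) * c i) ^ 2 = 2 ^ Fintype.card ι * ∑ i, c i ^ 2 := by
  simp_rw [sq, sum_mul_sum, mul_mul_mul_comm _ (c _)]
  rw [sum_comm]
  simp_rw [sum_comm (s := univ (α := ι → Bool)), ← sum_mul, sum_boolSign_mul_boolSign,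
    ite_mul, zero_mul, sum_ite_eq, if_pos (mem_univ _), mul_sum]

lemma inv_two_pow_mul_sum_abs_sum_boolSign_mul_le (c : ι → ℝ) :
    (2 ^ Fintype.card ι : ℝ)⁻¹ * ∑ ε : ι → Bool, |∑ i, boolSign (ε i) * c i| ≤
      √(∑ i, c i ^ 2) := by
  have hcs := sq_sum_le_card_mul_sum_sq (s := univ)
    (f := fun ε : ι → Bool => |∑ i, boolSign (ε i) * c i|)
  simp only [sq_abs, sum_sq_sum_boolSign_mul, card_univ, Fintype.card_fun,
    Fintype.card_bool] at hcs
  push_cast at hcs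
  set N : ℝ := 2 ^ Fintype.card ι
  have hN : N ≠ 0 := by positivity
  rw [Real.le_sqrt (by positivity) (by positivity), mul_pow]
  calc N⁻¹ ^ 2 * _ ≤ N⁻¹ ^ 2 * (N * (N * ∑ i, c i ^ 2)) := by gcongr
    _ = ∑ i, c i ^ 2 := by field_simp

end Rademacher

section SignAverage

variable {ι E : Type*} [Fintype ι] [NormedAddCommGroup E] [NormedSpace ℝ E]

noncomputable def signAverage (f : ι → StrongDual ℝ E) (ε : ι → Bool) : StrongDual ℝ E :=
  (2 ^ Fintype.card ι : ℝ)⁻¹ • ∑ i, boolSign (ε i) • f i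

lemma signAverage_apply (f : ι → StrongDual ℝ E) (ε : ι → Bool) (x : E) :
    signAverage f ε x = (2 ^ Fintype.card ι : ℝ)⁻¹ * ∑ i, boolSign (ε i) * f i x := by
  simp [signAverage]

lemma sum_abs_signAverage_apply_le [DecidableEq ι] (f : ι → StrongDual ℝ E) (x : E) :
    ∑ ε, |signAverage f ε x| ≤ √(∑ i, f i x ^ 2) := by
  simpa [signAverage_apply, abs_mul, ← mul_sum] using
    inv_two_pow_mul_sum_abs_sum_boolSign_mul_le fun i => f i x

lemma sum_abs_signAverage_apply_of_apply_eq_zero [DecidableEq ι] (f : ι → StrongDual ℝ E)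
    {x : E} {i : ι} (hx : ∀ j ≠ i, f j x = 0) : ∑ ε, |signAverage f ε x| = |f i x| := by
  have hterm (ε : ι → Bool) : |signAverage f ε x| = (2 ^ Fintype.card ι : ℝ)⁻¹ * |f i x| := by
    rw [signAverage_apply, sum_eq_single i (fun j _ hj => by rw [hx j hj, mul_zero]) (by simp),
      abs_mul, abs_mul, abs_boolSign, one_mul, abs_of_pos (by positivity)]
  simp only [hterm, sum_const, card_univ, Fintype.card_fun, Fintype.card_bool, nsmul_eq_mul]
  push_cast
  exact mul_inv_cancel_left₀ (by positivity) _

end SignAverage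

lemma lp.sum_sq_mul_apply_le {α ι : Type*} [Fintype ι] {p s : ℝ} [Fact (1 ≤ ENNReal.ofReal p)]
    (hsp : s.HolderTriple p 2) (μ : ι → ℝ) {g : ι → α} (hg : g.Injective)
    (x : lp (fun _ : α => ℝ) (ENNReal.ofReal p)) :
    ∑ i, (μ i * x (g i)) ^ 2 ≤ (∑ i, |μ i| ^ s) ^ (2 / s) * ‖x‖ ^ 2 := by
  have hp := hsp.symm.pos
  have hx : ∑ i, |x (g i)| ^ p ≤ ‖x‖ ^ p := by
    simpa [ENNReal.toReal_ofReal hp.le, sum_map] using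
      lp.sum_rpow_le_norm_rpow (by rwa [ENNReal.toReal_ofReal hp.le]) x (univ.map ⟨g, hg⟩)
  calc ∑ i, (μ i * x (g i)) ^ 2
      = ∑ i, |μ i * x (g i)| ^ (2 : ℝ) := by simp only [Real.rpow_two, sq_abs]
    _ ≤ (∑ i, |μ i| ^ s) ^ (2 / s) * (∑ i, |x (g i)| ^ p) ^ (2 / p) :=
      Real.Lr_rpow_le_Lp_mul_Lq _ _ _ hsp
    _ ≤ (∑ i, |μ i| ^ s) ^ (2 / s) * (‖x‖ ^ p) ^ (2 / p) := by gcongr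
    _ = (∑ i, |μ i| ^ s) ^ (2 / s) * ‖x‖ ^ 2 := by
      rw [← Real.rpow_mul (norm_nonneg x), mul_div_cancel₀ _ hp.ne', Real.rpow_two]

lemma exists_nonneg_sum_rpow_le_one_sum_mul_eq {ι : Type*} [Fintype ι] {r s : ℝ}
    (hrs : r.HolderConjugate s) (lam : ι → ℝ) (hlam : ∀ i, 0 ≤ lam i) :
    ∃ μ : ι → ℝ, (∀ i, 0 ≤ μ i) ∧ ∑ i, μ i ^ s ≤ 1 ∧
      ∑ i, lam i * μ i = (∑ i, lam i ^ r) ^ (1 / r) := by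
  obtain ⟨μ, hμ, hμlam⟩ := (NNReal.isGreatest_Lp univ (fun i => ⟨lam i, hlam i⟩) hrs).1
  have hμ' := NNReal.coe_le_coe.2 hμ
  have hμlam' := congrArg ((↑) : NNReal → ℝ) hμlam
  push_cast at hμ' hμlam'
  exact ⟨fun i => μ i, fun i => (μ i).2, hμ', hμlam'⟩

/-- **Theorem 3.3, lower estimate.** For `2 < p < ∞` and `1/r = 1/2 + 1/p`, and nonnegative
scalars `λ_1, …, λ_m`, there exist functionals `x_1*, …, x_n*` on `ℓ_p` with
`sup_{‖x‖≤1} ∑_k |x_k*(x)| ≤ 1` and `∑_k ∑_i λ_i |x_k*(e_i)| ≥ (∑_i λ_i^r)^(1/r)`.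
This witnesses the estimate `‖∑ λ_i |δ_{e_i}|‖_{FBL[ℓ_p]} ≥ (∑ λ_i^r)^(1/r)` via the
explicit formula for the free Banach lattice norm. -/
theorem fbl_lp_abs_lower (p r : ℝ) (hp : 2 < p) (hr : 1 / r = 1 / 2 + 1 / p)
    [Fact (1 ≤ ENNReal.ofReal p)]
    (m : ℕ) (lam : Fin m → ℝ) (hlam : ∀ i, 0 ≤ lam i) :
    ∃ (n : ℕ) (xs : Fin n → (lp (fun _ : ℕ => ℝ) (ENNReal.ofReal p) →L[ℝ] ℝ)),
      (∀ x, ‖x‖ ≤ 1 → ∑ k, |xs k x| ≤ 1) ∧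
      (∑ i, lam i ^ r) ^ (1 / r) ≤
        ∑ k, ∑ i, lam i * |xs k (lp.single (ENNReal.ofReal p) (i : ℕ) (1 : ℝ))| := by
  set s := (2⁻¹ - p⁻¹)⁻¹
  have hp0 : 0 < p := by linarith
  have hs0 : 0 < s := inv_pos.2 (sub_pos.2 (inv_strictAnti₀ two_pos hp))
  have hsp : s.HolderTriple p 2 := ⟨by simp [s], hs0, hp0⟩
  have hr0 : 0 < r := one_div_pos.1 (hr ▸ by positivity)
  have hrs : r.HolderConjugate s := ⟨by simp [s, ← one_div, hr], hr0, hs0⟩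
  obtain ⟨μ, hμ0, hμs, hμlam⟩ := exists_nonneg_sum_rpow_le_one_sum_mul_eq hrs lam hlam
  let f (i : Fin m) : StrongDual ℝ (lp (fun _ : ℕ => ℝ) (ENNReal.ofReal p)) :=
    μ i • lp.evalCLM ℝ _ _ (i : ℕ)
  have hf (i : Fin m) (x : lp (fun _ : ℕ => ℝ) (ENNReal.ofReal p)) : f i x = μ i * x i := rfl
  let e := Fintype.equivFin (Fin m → Bool)
  refine ⟨_, fun k => signAverage f (e.symm k), fun x hx => ?_, ?_⟩
  · rw [e.symm.sum_comp fun ε => |signAverage f ε x|]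
    refine (sum_abs_signAverage_apply_le f x).trans (Real.sqrt_le_one.2 ?_)
    calc ∑ i, f i x ^ 2 ≤ (∑ i, |μ i| ^ s) ^ (2 / s) * ‖x‖ ^ 2 :=
          lp.sum_sq_mul_apply_le hsp μ Fin.val_injective x
      _ ≤ 1 := by
        simp only [abs_of_nonneg (hμ0 _)]
        have hμs' := Real.rpow_le_one (sum_nonneg fun i _ => Real.rpow_nonneg (hμ0 i) s) hμs
          (div_nonneg zero_le_two hs0.le)
        exact mul_le_one₀ hμs' (by positivity) (pow_le_one₀ (norm_nonneg x) hx)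
  · have hsingle (i : Fin m) :
        ∑ ε, |signAverage f ε (lp.single (ENNReal.ofReal p) (i : ℕ) (1 : ℝ))| = μ i := by
      rw [sum_abs_signAverage_apply_of_apply_eq_zero f (i := i)]
      · simp [hf, abs_of_nonneg (hμ0 i)]
      · intro j hj
        simp [hf, Fin.val_ne_of_ne hj]
    rw [sum_comm, ← hμlam]
    refine le_of_eq (sum_congr rfl fun i _ => ?_)
    rw [← mul_sum, e.symm.sum_comp fun ε => |signAverage f ε _|, hsingle]
end

section
/- Let 2 < p < ∞ be real and set s = 2p/(p−2). Let m ∈ ℕ, let W be an m × m real matrix with all entries in {−1, 1} whose columns are pairwise orthogonal, and let b_1, …, b_m be nonnegative reals with ∑_{i=1}^m b_i^s ≤ 1. Then for every x ∈ ℓ_p with ‖x‖ ≤ 1, one has ∑_{j=1}^m | (1/m) ∑_{i=1}^m b_i W_{i j} x_i | ≤ 1. -/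
/-!
With `y i = b i * x i`, orthogonality of the `±1` columns makes `W / √m` an orthogonal matrix,
so `∑ⱼ (yᵀW)ⱼ² = m ∑ᵢ yᵢ²`. Hölder's inequality with `1/s + 1/p = 1/2` gives `∑ᵢ yᵢ² ≤ 1`,
and Cauchy–Schwarz then bounds `∑ⱼ |(yᵀW)ⱼ|` by `√m · √m = m`.
-/

open Finset Matrix

namespace Matrix

variable {R : Type*} {ι κ : Type*}

theorem transpose_mul_self_eq_card_smul_one [CommRing R] [Fintype ι] [DecidableEq κ]
    (W : Matrix ι κ R) (hW : ∀ i j, W i j = 1 ∨ W i j = -1)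
    (horth : ∀ j l, j ≠ l → ∑ i, W i j * W i l = 0) :
    Wᵀ * W = (Fintype.card ι : R) • 1 := by
  ext j l
  rcases eq_or_ne j l with rfl | hjl
  · have hsq : ∀ i, W i j * W i j = 1 := fun i => by rcases hW i j with h | h <;> simp [h]
    simp [mul_apply, hsq]
  · simp [mul_apply, horth j l hjl, hjl]

theorem mul_transpose_eq_smul_one_of_transpose_mul {K : Type*} [Field K] [Fintype ι]
    [DecidableEq ι] {W : Matrix ι ι K} {c : K} (hc : c ≠ 0) (h : Wᵀ * W = c • 1) :
    W * Wᵀ = c • 1 := by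
  have hinv : W * (c⁻¹ • Wᵀ) = 1 :=
    mul_eq_one_comm.mp (by rw [smul_mul, h, smul_smul, inv_mul_cancel₀ hc, one_smul])
  rw [← smul_inv_smul₀ hc Wᵀ, Matrix.mul_smul, hinv]

theorem sum_vecMul_sq_of_mul_transpose [CommRing R] [Fintype ι] [Fintype κ] [DecidableEq ι]
    {W : Matrix ι κ R} {c : R} (h : W * Wᵀ = c • 1) (y : ι → R) :
    ∑ j, (y ᵥ* W) j ^ 2 = c * ∑ i, y i ^ 2 := by
  have key : (y ᵥ* W) ⬝ᵥ (y ᵥ* W) = c * (y ⬝ᵥ y) := by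
    rw [← dotProduct_mulVec, ← mulVec_transpose, mulVec_mulVec, h, smul_mulVec, one_mulVec,
      dotProduct_smul, smul_eq_mul]
  simpa only [dotProduct, sq] using key

end Matrix

theorem Real.sum_abs_mul_rpow_le_one_of_holderTriple {ι : Type*} (s : Finset ι) {f g : ι → ℝ}
    {p q r : ℝ} (hpqr : p.HolderTriple q r) (hf : ∑ i ∈ s, |f i| ^ p ≤ 1)
    (hg : ∑ i ∈ s, |g i| ^ q ≤ 1) : ∑ i ∈ s, |f i * g i| ^ r ≤ 1 :=
  (Real.Lr_rpow_le_Lp_mul_Lq s f g hpqr).trans <| mul_le_one₀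
    (Real.rpow_le_one (by positivity) hf (div_nonneg hpqr.pos'.le hpqr.left_pos.le))
    (by positivity)
    (Real.rpow_le_one (by positivity) hg (div_nonneg hpqr.pos'.le hpqr.right_pos.le))

theorem lp.sum_norm_rpow_le_one {α : Type*} {E : α → Type*} [∀ i, NormedAddCommGroup (E i)]
    {p : ENNReal} [Fact (1 ≤ p)] (hp : 0 < p.toReal) {f : lp E p} (hf : ‖f‖ ≤ 1)
    (s : Finset α) : ∑ i ∈ s, ‖f i‖ ^ p.toReal ≤ 1 :=
  (lp.sum_rpow_le_norm_rpow hp f s).trans (Real.rpow_le_one (norm_nonneg f) hf hp.le)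

theorem sum_abs_le_card_of_sum_sq_le_card {ι : Type*} [Fintype ι] {v : ι → ℝ}
    (hv : ∑ j, v j ^ 2 ≤ Fintype.card ι) : ∑ j, |v j| ≤ Fintype.card ι := by
  refine (pow_le_pow_iff_left₀ (by positivity) (by positivity) two_ne_zero).mp ?_
  calc (∑ j, |v j|) ^ 2 ≤ Fintype.card ι * ∑ j, |v j| ^ 2 := sq_sum_le_card_mul_sum_sq
    _ ≤ (Fintype.card ι : ℝ) ^ 2 := by simp only [sq_abs]; rw [sq]; gcongr

/-- **The dual-family estimate in Theorem 3.3 (ℓ_p case).** Let `2 < p < ∞`,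
`s = 2p/(p-2)` (the Hölder conjugate of `r = 2p/(p+2)`), `W` an `m × m` matrix with
entries in `{-1, 1}` and pairwise orthogonal columns, and `b_1, …, b_m ≥ 0` with
`∑ b_i^s ≤ 1`.  Then for every `x ∈ ℓ_p` with `‖x‖ ≤ 1`,
`∑_j |(1/m) ∑_i b_i W i j x_i| ≤ 1`. -/
theorem fbl_lp_dual_family_estimate (p : ℝ) (hp : 2 < p) (s : ℝ) (hs : s = 2 * p / (p - 2))
    [Fact (1 ≤ ENNReal.ofReal p)]
    (m : ℕ) (W : Matrix (Fin m) (Fin m) ℝ)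
    (hW : ∀ i j, W i j = 1 ∨ W i j = -1)
    (horth : ∀ j l, j ≠ l → ∑ i, W i j * W i l = 0)
    (b : Fin m → ℝ) (hb : ∀ i, 0 ≤ b i) (hbs : ∑ i, b i ^ s ≤ 1)
    (x : lp (fun _ : ℕ => ℝ) (ENNReal.ofReal p)) (hx : ‖x‖ ≤ 1) :
    ∑ j, abs ((1 / (m : ℝ)) * ∑ i, b i * W i j * x (i : ℕ)) ≤ 1 := by
  rcases Nat.eq_zero_or_pos m with rfl | hm
  · simp
  have hm' : (m : ℝ) ≠ 0 := by positivity
  have hWWt : W * Wᵀ = (m : ℝ) • 1 := mul_transpose_eq_smul_one_of_transpose_mul hm' <| by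
    simpa using transpose_mul_self_eq_card_smul_one W hW horth
  have hholder : s.HolderTriple p 2 :=
    ⟨by rw [hs]; field_simp; ring, by rw [hs]; exact div_pos (by linarith) (by linarith),
      by linarith⟩
  set y : Fin m → ℝ := fun i => b i * x i
  have hy : ∑ i, y i ^ 2 ≤ 1 := by
    have hx' : ∑ i : Fin m, |x i| ^ p ≤ 1 := by
      have hp' : (ENNReal.ofReal p).toReal = p := ENNReal.toReal_ofReal (by linarith)
      have := lp.sum_norm_rpow_le_one (hp'.symm ▸ by linarith) hx (range m)
      rwa [← Fin.sum_univ_eq_sum_range (fun i => ‖x i‖ ^ (ENNReal.ofReal p).toReal), hp'] at this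
    have := Real.sum_abs_mul_rpow_le_one_of_holderTriple univ hholder (f := b)
      (by simpa only [abs_of_nonneg (hb _)] using hbs) hx'
    simpa only [Real.rpow_two, sq_abs] using this
  have hv : ∑ j, |(y ᵥ* W) j| ≤ m := by
    simpa using sum_abs_le_card_of_sum_sq_le_card (v := y ᵥ* W) <| by
      rw [sum_vecMul_sq_of_mul_transpose hWWt, Fintype.card_fin]
      exact mul_le_of_le_one_right (Nat.cast_nonneg m) hy
  calc ∑ j, |1 / (m : ℝ) * ∑ i, b i * W i j * x i| = 1 / m * ∑ j, |(y ᵥ* W) j| := by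
        simp only [abs_mul, ← mul_sum, vecMul, dotProduct, y]
        simp [mul_right_comm]
    _ ≤ 1 / m * m := by gcongr
    _ = 1 := by field_simp
end

section
/- Let m ∈ ℕ, let W be an m × m real matrix with all entries in {−1, 1} whose columns are pairwise orthogonal, and let b_1, …, b_m be nonnegative reals with ∑_{i=1}^m b_i^2 ≤ 1. Then for all real numbers x_1, …, x_m with |x_i| ≤ 1 for every i, one has ∑_{j=1}^m | (1/m) ∑_{i=1}^m b_i W_{i j} x_i | ≤ 1. -/
/-!
Put `a i = b i * x i`, so that `∑ a i ^ 2 ≤ 1` and the inner sums are the entries of `a ᵥ* W`.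
Testing against the sign vector `s` of `a ᵥ* W` gives `∑ j |(a ᵥ* W) j| = a ⬝ᵥ W *ᵥ s`, which by
Cauchy–Schwarz is at most `‖a‖₂ ‖W *ᵥ s‖₂`; orthogonality of the `±1` columns means `Wᵀ W = m • 1`,
hence `‖W *ᵥ s‖₂² = m ‖s‖₂² = m²`.
-/

open Matrix

namespace Matrix

variable {κ ι : Type*} [Fintype κ]

theorem transpose_mul_self_eq_card_smul_one_of_sign_entries [DecidableEq ι]
    (W : Matrix κ ι ℝ) (hW : ∀ i j, W i j = 1 ∨ W i j = -1)
    (horth : ∀ j l, j ≠ l → ∑ i, W i j * W i l = 0) :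
    Wᵀ * W = (Fintype.card κ : ℝ) • 1 := by
  ext j l
  rcases eq_or_ne j l with rfl | hjl
  · have hsq : ∀ i, W i j * W i j = 1 := fun i => by rcases hW i j with h | h <;> simp [h]
    simp [mul_apply, hsq]
  · simp [mul_apply, hjl, horth j l hjl]

variable [Fintype ι]

theorem sq_dotProduct_le (u v : ι → ℝ) : (u ⬝ᵥ v) ^ 2 ≤ (u ⬝ᵥ u) * (v ⬝ᵥ v) := by
  simpa only [dotProduct, sq] using Finset.sum_mul_sq_le_sq_mul_sq Finset.univ u v

variable [DecidableEq ι]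

theorem mulVec_dotProduct_mulVec_self {R : Type*} [CommSemiring R] {W : Matrix κ ι R} {c : R}
    (hW : Wᵀ * W = c • 1) (v : ι → R) : W *ᵥ v ⬝ᵥ W *ᵥ v = c * (v ⬝ᵥ v) := by
  rw [dotProduct_comm, dotProduct_mulVec, ← mulVec_transpose, mulVec_mulVec, hW, smul_mulVec,
    one_mulVec, smul_dotProduct, smul_eq_mul]

theorem sq_sum_abs_vecMul_le {W : Matrix κ ι ℝ} {c : ℝ} (hW : Wᵀ * W = c • 1) (a : κ → ℝ) :
    (∑ j, |(a ᵥ* W) j|) ^ 2 ≤ c * Fintype.card ι * (a ⬝ᵥ a) := by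
  set s : ι → ℝ := fun j => if 0 ≤ (a ᵥ* W) j then 1 else -1
  have hs : s ⬝ᵥ s = Fintype.card ι := by
    simp [dotProduct, s, apply_ite (fun t : ℝ => t * t)]
  have habs : ∑ j, |(a ᵥ* W) j| = a ⬝ᵥ W *ᵥ s := by
    rw [dotProduct_mulVec, dotProduct]
    refine Finset.sum_congr rfl fun j _ => ?_
    by_cases h : 0 ≤ (a ᵥ* W) j
    · simp [s, h, abs_of_nonneg h]
    · simp [s, h, abs_of_neg (not_le.mp h)]
  calc (∑ j, |(a ᵥ* W) j|) ^ 2 = (a ⬝ᵥ W *ᵥ s) ^ 2 := by rw [habs]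
    _ ≤ (a ⬝ᵥ a) * (W *ᵥ s ⬝ᵥ W *ᵥ s) := sq_dotProduct_le a _
    _ = c * Fintype.card ι * (a ⬝ᵥ a) := by
      rw [mulVec_dotProduct_mulVec_self hW, hs]; ring

end Matrix

theorem fbl_c0_dual_family_estimate_general
    (m : ℕ) (W : Matrix (Fin m) (Fin m) ℝ)
    (hW : ∀ i j, W i j = 1 ∨ W i j = -1)
    (horth : ∀ j l, j ≠ l → ∑ i, W i j * W i l = 0)
    (b : Fin m → ℝ) (hb2 : ∑ i, b i ^ 2 ≤ 1)
    (x : Fin m → ℝ) (hx : ∀ i, |x i| ≤ 1) :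
    ∑ j, abs ((1 / (m : ℝ)) * ∑ i, b i * W i j * x i) ≤ 1 := by
  set a : Fin m → ℝ := fun i => b i * x i
  have hWW : Wᵀ * W = (m : ℝ) • 1 := by
    simpa using transpose_mul_self_eq_card_smul_one_of_sign_entries W hW horth
  have ha : a ⬝ᵥ a ≤ 1 := by
    refine le_trans (Finset.sum_le_sum fun i _ => ?_) hb2
    have : x i * x i ≤ 1 := by nlinarith [abs_mul_abs_self (x i), abs_nonneg (x i), hx i]
    nlinarith [sq_nonneg (b i)]
  have hcol : ∀ j, ∑ i, b i * W i j * x i = (a ᵥ* W) j := fun j =>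
    Finset.sum_congr rfl fun i _ => by ring
  have hsum : ∑ j, |(a ᵥ* W) j| ≤ m := by
    refine abs_le_of_sq_le_sq' ?_ m.cast_nonneg |>.2
    calc _ ≤ (m : ℝ) * m * (a ⬝ᵥ a) := by simpa using sq_sum_abs_vecMul_le hWW a
      _ ≤ (m : ℝ) ^ 2 := by nlinarith [sq_nonneg (m : ℝ)]
  calc ∑ j, |1 / (m : ℝ) * ∑ i, b i * W i j * x i|
      = (m : ℝ)⁻¹ * ∑ j, |(a ᵥ* W) j| := by
        simp only [hcol, abs_mul, ← Finset.mul_sum, one_div, abs_inv, Nat.abs_cast]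
    _ ≤ 1 := inv_mul_le_one_of_le₀ hsum m.cast_nonneg

/-- **The dual-family estimate in Remark 3.4 (c₀ case).** Let `W` be an `m × m` matrix with
entries in `{-1, 1}` and pairwise orthogonal columns, and `b_1, …, b_m ≥ 0` with
`∑ b_i^2 ≤ 1`.  Then for all reals `x_1, …, x_m` with `|x_i| ≤ 1`,
`∑_j |(1/m) ∑_i b_i W i j x_i| ≤ 1`. -/
theorem fbl_c0_dual_family_estimate
    (m : ℕ) (W : Matrix (Fin m) (Fin m) ℝ)
    (hW : ∀ i j, W i j = 1 ∨ W i j = -1)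
    (horth : ∀ j l, j ≠ l → ∑ i, W i j * W i l = 0)
    (b : Fin m → ℝ) (hb : ∀ i, 0 ≤ b i) (hb2 : ∑ i, b i ^ 2 ≤ 1)
    (x : Fin m → ℝ) (hx : ∀ i, |x i| ≤ 1) :
    ∑ j, abs ((1 / (m : ℝ)) * ∑ i, b i * W i j * x i) ≤ 1 :=
  fbl_c0_dual_family_estimate_general m W hW horth b hb2 x hx
end

section
/- Let E be a real Banach space and let x ∈ E. Then sup{ ∑_{k=1}^n |x_k*(x)| : n ∈ ℕ, x_1*,…,x_n* ∈ E*, sup_{‖y‖_E ≤ 1} ∑_{k=1}^n |x_k*(y)| ≤ 1 } = ‖x‖_E. -/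
/-!
A finite family of functionals with `∑ |x_k*(y)| ≤ 1` on the unit ball gives, by homogeneity,
`∑ |x_k*(x)| ≤ ‖x‖` for every `x`; conversely the single norming functional of `x` supplied by
Hahn–Banach is such a family and attains `‖x‖`.
-/

section

variable {E : Type*} [NormedAddCommGroup E] [NormedSpace ℝ E]

theorem sum_abs_apply_le_norm_of_unitBall {ι : Type*} [Fintype ι] {xs : ι → E →L[ℝ] ℝ}
    (hxs : ∀ y, ‖y‖ ≤ 1 → ∑ k, |xs k y| ≤ 1) (x : E) : ∑ k, |xs k x| ≤ ‖x‖ := by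
  rcases eq_or_ne x 0 with rfl | hx
  · simp
  have hscaled := hxs (‖x‖⁻¹ • x) (norm_smul_inv_norm hx).le
  simp only [map_smul, smul_eq_mul, abs_mul, abs_inv, abs_norm, ← Finset.mul_sum] at hscaled
  simpa using (inv_mul_le_iff₀ (norm_pos_iff.mpr hx)).mp hscaled

theorem isGreatest_sum_abs_apply_of_unitBall (x : E) :
    IsGreatest {s : ℝ | ∃ (n : ℕ) (xs : Fin n → E →L[ℝ] ℝ),
        (∀ y, ‖y‖ ≤ 1 → ∑ k, |xs k y| ≤ 1) ∧ s = ∑ k, |xs k x|} ‖x‖ := by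
  refine ⟨?_, ?_⟩
  · obtain ⟨g, hg, hgx⟩ := exists_dual_vector'' ℝ x
    refine ⟨1, fun _ => g, fun y hy => ?_, by simp [hgx]⟩
    simpa using (g.le_opNorm y).trans (mul_le_one₀ hg (norm_nonneg y) hy)
  · rintro s ⟨n, xs, hxs, rfl⟩
    exact sum_abs_apply_le_norm_of_unitBall hxs x

end

theorem fbl_delta_isometry_general
    (E : Type) [NormedAddCommGroup E] [NormedSpace ℝ E] (x : E) :
    sSup {s : ℝ | ∃ (n : ℕ) (xs : Fin n → E →L[ℝ] ℝ),
        (∀ y, ‖y‖ ≤ 1 → ∑ k, |xs k y| ≤ 1) ∧ s = ∑ k, |xs k x|} = ‖x‖ :=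
  (isGreatest_sum_abs_apply_of_unitBall x).csSup_eq

/-- **The canonical embedding `x ↦ δ_x` of `E` into `FBL[E]` is an isometry.** For any `x`
in a real Banach space `E`, the free Banach lattice norm of `δ_x`, given by the explicit
supremum formula, equals `‖x‖`. -/
theorem fbl_delta_isometry
    (E : Type) [NormedAddCommGroup E] [NormedSpace ℝ E] [CompleteSpace E] (x : E) :
    sSup {s : ℝ | ∃ (n : ℕ) (xs : Fin n → E →L[ℝ] ℝ),
        (∀ y, ‖y‖ ≤ 1 → ∑ k, |xs k y| ≤ 1) ∧ s = ∑ k, |xs k x|} = ‖x‖ :=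
  fbl_delta_isometry_general E x
end
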